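/- arXiv:1305.4591 — 2 statements merged into one kernel-verified Lean document; each statement's English description precedes it below -/
import Mathlib

section
/- A bit-flip on qubit 1 of the encoded state produces error syndrome 0110 and a phase-flipped data qubit: for every c = (c(0), c(1)) ∈ ℂ² there is a nonzero complex scalar α independent of c such that T(B₁(f(c))) = α · |0110⟩ ⊗ (c(0)|0⟩ − c(1)|1⟩); applying σ_Z to the data qubit then restores the original state. -/
open scoped BigOperators

noncomputable section

/-- The 5-qubit state space `V₅ = (Fin 5 → Fin 2) → ℂ ≅ ℂ^32` with the standard
Hermitian inner product. -/
abbrev V5 : Type := EuclideanSpace ℂ (Fin 5 → Fin 2)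

/-- The phase exponent `γ(x,y) = x(y₀+y₁+y₂) + y₀y₁ + y₀y₃ + y₁y₄ + y₂y₃ + y₂y₄ + y₃y₄`,
read modulo 2 via `(-1)^·`. -/
def gam (x : Fin 2) (y : Fin 5 → Fin 2) : ℕ :=
  x.val * ((y 0).val + (y 1).val + (y 2).val)
    + (y 0).val * (y 1).val + (y 0).val * (y 3).val + (y 1).val * (y 4).val
    + (y 2).val * (y 3).val + (y 2).val * (y 4).val + (y 3).val * (y 4).val

/-- The graph-code encoding `f : ℂ² → V₅`, `f(c)(y) = Σ_x (−1)^{γ(x,y)} c(x)`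
(normalization factors omitted). -/
def enc (c : Fin 2 → ℂ) : V5 := WithLp.toLp 2 (fun y => ∑ x : Fin 2, (-1 : ℂ) ^ gam x y * c x)

/-- The decoding phase exponent `θ`, with `z = (l₀, l₁, l₃, l₄, x̂)`. -/
def theta (y z : Fin 5 → Fin 2) : ℕ :=
  (z 4).val * ((y 0).val + (y 1).val + (y 2).val)
    + (y 0).val * (y 1).val + (y 0).val * (y 3).val + (y 1).val * (y 4).val
    + (y 2).val * (y 3).val + (y 2).val * (y 4).val + (y 3).val * (y 4).val
    + (y 0).val * (z 0).val + (y 1).val * (z 1).val + (y 3).val * (z 2).val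
    + (y 4).val * (z 3).val

/-- The graph decoding operator `T : V₅ → V₅`,
`T|y⟩ = Σ_{l₀l₁l₃l₄, x̂} (−1)^θ |l₀l₁l₃l₄x̂⟩`. -/
def dec (ψ : V5) : V5 := WithLp.toLp 2 (fun z => ∑ y : Fin 5 → Fin 2, (-1 : ℂ) ^ theta y z * ψ y)

/-- The product state `|s₀s₁s₂s₃⟩ ⊗ (a|0⟩ + b|1⟩)` in `V₅`: four syndrome qubits
followed by one data qubit. -/
def synData (s : Fin 4 → Fin 2) (a b : ℂ) : V5 :=
  WithLp.toLp 2 (fun y => (if y 0 = s 0 ∧ y 1 = s 1 ∧ y 2 = s 2 ∧ y 3 = s 3 then (1 : ℂ) else 0)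
    * (if y 4 = 0 then a else b))

/-- Bit-flip (Pauli `σ_X`) on qubit `i` (0-indexed: qubit `j` of the paper is `i = j - 1`). -/
def bitFlip (i : Fin 5) (ψ : V5) : V5 := WithLp.toLp 2 (fun y => ψ (Function.update y i (1 - y i)))

/-- Phase-flip (Pauli `σ_Z`) on qubit `i` (0-indexed). -/
def phaseFlip (i : Fin 5) (ψ : V5) : V5 := WithLp.toLp 2 (fun y => (-1 : ℂ) ^ (y i).val * ψ y)

/-!
Summing over the data qubit `x` of `f(c)`, the amplitude of `T(B₁ f(c))` at `z` is
`Σ_x c(x) Σ_y (-1)^(θ(y,z) + γ(x, B₁y))`. In this exponent the quadratic part of the graph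
phase cancels mod 2, leaving `x` plus a linear form in `y`, so the inner sum is a character sum
over `(ℤ/2)⁵`: it equals `32 (-1)^x` when every coefficient of the form is even and vanishes
otherwise. The coefficients are all even exactly when `x = x̂` and the syndrome is `0110`.
-/

open Finset

theorem neg_one_pow_eq_of_natCast_eq {R : Type*} [Monoid R] [HasDistribNeg R] {m n : ℕ}
    (h : (m : ZMod 2) = n) : (-1 : R) ^ m = (-1) ^ n :=
  neg_one_pow_congr <| by
    rw [← ZMod.natCast_eq_zero_iff_even, ← ZMod.natCast_eq_zero_iff_even, h]

theorem sum_neg_one_pow_sum_mul {ι R : Type*} [Fintype ι] [DecidableEq ι] [CommRing R]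
    (a : ι → ℕ) :
    ∑ y : ι → Fin 2, (-1 : R) ^ (∑ i, a i * (y i).val) =
      if ∀ i, Even (a i) then 2 ^ Fintype.card ι else 0 := by
  have sum_fin_two (k : ℕ) : ∑ b : Fin 2, (-1 : R) ^ (k * b.val) = if Even k then 2 else 0 := by
    rcases Nat.even_or_odd k with hk | hk
    · simp [hk]
    · simp [Fin.sum_univ_two, hk.neg_one_pow, Nat.not_even_iff_odd.mpr hk]
  simp_rw [← prod_pow_eq_pow_sum]
  rw [← Fintype.prod_sum fun i (b : Fin 2) => (-1 : R) ^ (a i * b.val)]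
  simp_rw [sum_fin_two, Fintype.prod_ite_zero, prod_const, card_univ]

/-- Flipping `y₀` adds `x + y₁ + y₃` to `γ(x, y)`, and
`γ(x̂, y) + γ(x, y) ≡ (x̂ + x)(y₀ + y₁ + y₂)` mod 2; with the syndrome terms of `θ` this gives
the linear form in `y` with these coefficients. -/
def bitFlipZeroCoeff (x : Fin 2) (z : Fin 5 → Fin 2) : Fin 5 → ℕ :=
  ![(z 4).val + x.val + (z 0).val, (z 4).val + x.val + (z 1).val + 1, (z 4).val + x.val,
    (z 2).val + 1, (z 3).val]

theorem theta_add_gam_bitFlip_zero (x : Fin 2) (y z : Fin 5 → Fin 2) :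
    ((theta y z + gam x (Function.update y 0 (1 - y 0)) : ℕ) : ZMod 2) =
      ((x.val + ∑ i, bitFlipZeroCoeff x z i * (y i).val : ℕ) : ZMod 2) := by
  obtain h | h : y 0 = 0 ∨ y 0 = 1 := by generalize y 0 = b; decide +revert
  all_goals
    simp only [theta, gam, bitFlipZeroCoeff, Fin.sum_univ_five, Function.update_apply, h,
      Fin.reduceEq, if_true, if_false, sub_zero, sub_self, Fin.val_zero, Fin.val_one,
      Matrix.cons_val, Nat.cast_add, Nat.cast_mul, Nat.cast_one]
    ring_nf
    reduce_mod_char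

theorem dec_bitFlip_zero_enc_apply (c : Fin 2 → ℂ) (z : Fin 5 → Fin 2) :
    dec (bitFlip 0 (enc c)) z =
      ∑ x, (-1) ^ x.val * (if ∀ i, Even (bitFlipZeroCoeff x z i) then 32 else 0) * c x := by
  simp only [dec, bitFlip, enc, PiLp.toLp_apply, mul_sum]
  rw [sum_comm]
  refine sum_congr rfl fun x _ => ?_
  calc ∑ y, (-1 : ℂ) ^ theta y z * ((-1) ^ gam x (Function.update y 0 (1 - y 0)) * c x)
      = ∑ y : Fin 5 → Fin 2,
          (-1 : ℂ) ^ (x.val + ∑ i, bitFlipZeroCoeff x z i * (y i).val) * c x := by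
        refine sum_congr rfl fun y _ => ?_
        rw [← mul_assoc, ← pow_add,
          neg_one_pow_eq_of_natCast_eq (theta_add_gam_bitFlip_zero x y z)]
    _ = _ := by
        simp_rw [pow_add, ← sum_mul, ← mul_sum, sum_neg_one_pow_sum_mul, Fintype.card_fin]
        norm_num

theorem even_bitFlipZeroCoeff_iff (x : Fin 2) (z : Fin 5 → Fin 2) :
    (∀ i, Even (bitFlipZeroCoeff x z i)) ↔
      x = z 4 ∧ z 0 = 0 ∧ z 1 = 1 ∧ z 2 = 1 ∧ z 3 = 0 := by
  decide +revert

/-- A bit-flip on qubit 1 produces syndrome `0110` and a phase-flipped data qubit: `T(B₁ f(c)) = α |0110⟩ ⊗ (c(0)|0⟩ − c(1)|1⟩)` with `α ≠ 0` independent of `c`; applying `σ_Z` to the data qubit restores the original state. -/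
theorem bit_flip_qubit1_syndrome :
    ∃ α : ℂ, α ≠ 0 ∧ ∀ c : Fin 2 → ℂ,
      dec (bitFlip 0 (enc c)) = α • synData ![0, 1, 1, 0] (c 0) (-(c 1)) := by
  refine ⟨32, by norm_num, fun c => ?_⟩
  ext z
  rw [dec_bitFlip_zero_enc_apply]
  simp only [even_bitFlipZeroCoeff_iff, synData, PiLp.smul_apply, smul_eq_mul]
  obtain h4 | h4 : z 4 = 0 ∨ z 4 = 1 := by generalize z 4 = b; decide +revert
  all_goals
    by_cases hs : z 0 = 0 ∧ z 1 = 1 ∧ z 2 = 1 ∧ z 3 = 0 <;> simp [h4, hs]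
end
end

section
/- A combined bit-and-phase flip on qubit 3 of the encoded state produces error syndrome 1111: for every c = (c(0), c(1)) ∈ ℂ² there is a nonzero complex scalar α independent of c such that T(BS₃(f(c))) = α · |1111⟩ ⊗ (−c(0)|1⟩ + c(1)|0⟩). -/
open scoped BigOperators

noncomputable section

/-! Flipping bit 2 changes the quadratic phase `γ(x, ·)` by the linear form `x + y₃ + y₄`, and the
phase flip contributes `y₂`. Since `θ(y, z) = γ(z₄, y) + y₀z₀ + y₁z₁ + y₃z₂ + y₄z₃`, the quadratic
parts cancel mod 2 in each decoded amplitude, which becomes a character sum over `(ℤ/2)⁵` of a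
linear form in `y` with coefficients `phaseCoeff x z`. That sum is `32 · (-1)^x` when all
coefficients are even, i.e. when `z = 1111` and `x ≠ z₄`, and vanishes otherwise. -/

open Finset

section CharacterSum

variable {R ι : Type*} [CommRing R] [Fintype ι]

theorem prod_one_add_neg_one_pow (a : ι → ℕ) :
    ∏ i, (1 + (-1 : R) ^ a i) = if ∀ i, Even (a i) then 2 ^ Fintype.card ι else 0 := by
  split_ifs with h
  · rw [← card_univ, ← prod_const]
    refine prod_congr rfl fun i _ => ?_
    rw [(h i).neg_one_pow, one_add_one_eq_two]
  · push Not at h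
    obtain ⟨i, hi⟩ := h
    exact prod_eq_zero (mem_univ i) (by rw [(Nat.not_even_iff_odd.mp hi).neg_one_pow]; ring)

theorem sum_neg_one_pow_sum_mul_val [DecidableEq ι] (a : ι → ℕ) :
    ∑ y : ι → Fin 2, (-1 : R) ^ (∑ i, a i * (y i).val) = ∏ i, (1 + (-1 : R) ^ a i) := by
  have h : ∀ i, 1 + (-1 : R) ^ a i = ∑ b : Fin 2, (-1) ^ (a i * b.val) := by
    simp [Fin.sum_univ_two]
  simp_rw [h, Fintype.prod_sum, prod_pow_eq_pow_sum]

end CharacterSum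

def phaseCoeff (x : Fin 2) (z : Fin 5 → Fin 2) : Fin 5 → ℕ :=
  ![(z 4).val + x.val + (z 0).val, (z 4).val + x.val + (z 1).val, (z 4).val + x.val + 1,
    (z 2).val + 1, (z 3).val + 1]

section Signs

variable {R : Type*} [Monoid R] [HasDistribNeg R]

theorem neg_one_pow_gam_update_two (x : Fin 2) (y : Fin 5 → Fin 2) :
    (-1 : R) ^ gam x (Function.update y 2 (1 - y 2))
      = (-1) ^ (gam x y + x.val + (y 3).val + (y 4).val) := by
  obtain h | h : y 2 = 0 ∨ y 2 = 1 := by omega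
  · congr 1
    simp [gam, h]
    ring
  · have e : gam x y + x.val + (y 3).val + (y 4).val
        = gam x (Function.update y 2 (1 - y 2)) + 2 * (x.val + (y 3).val + (y 4).val) := by
      simp [gam, h]
      ring
    rw [e, pow_add, pow_mul, neg_one_sq, one_pow, mul_one]

theorem neg_one_pow_theta_add_gam (x : Fin 2) (y z : Fin 5 → Fin 2) :
    (-1 : R) ^ (theta y z + (y 2).val + (gam x y + x.val + (y 3).val + (y 4).val))
      = (-1) ^ x.val * (-1) ^ (∑ i, phaseCoeff x z i * (y i).val) := by
  have e : theta y z + (y 2).val + (gam x y + x.val + (y 3).val + (y 4).val)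
      = x.val + ∑ i, phaseCoeff x z i * (y i).val + 2 * gam 0 y := by
    simp [theta, gam, phaseCoeff, Fin.sum_univ_five]
    ring
  rw [e, pow_add, pow_add, pow_mul, neg_one_sq, one_pow, mul_one]

end Signs

theorem dec_phaseFlip_bitFlip_enc_apply (c : Fin 2 → ℂ) (z : Fin 5 → Fin 2) :
    dec (phaseFlip 2 (bitFlip 2 (enc c))) z
      = ∑ x, (-1) ^ x.val * (∏ i, (1 + (-1) ^ phaseCoeff x z i)) * c x := by
  simp only [dec, phaseFlip, bitFlip, enc, WithLp.ofLp_toLp, neg_one_pow_gam_update_two,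
    ← sum_neg_one_pow_sum_mul_val, mul_sum, sum_mul]
  rw [sum_comm]
  refine sum_congr rfl fun x _ => sum_congr rfl fun y _ => ?_
  rw [← mul_assoc, ← neg_one_pow_theta_add_gam, pow_add, pow_add]
  ring

theorem forall_even_phaseCoeff_iff (x : Fin 2) (z : Fin 5 → Fin 2) :
    (∀ i, Even (phaseCoeff x z i)) ↔ (z 0 = 1 ∧ z 1 = 1 ∧ z 2 = 1 ∧ z 3 = 1) ∧ x ≠ z 4 := by
  have even_val : ∀ b : Fin 2, Even b.val ↔ b = 0 := by decide
  simp [Fin.forall_fin_succ, phaseCoeff, Nat.even_add, even_val]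
  omega

/-- A combined bit-and-phase flip `BS₃ = S₃ ∘ B₃` on qubit 3 produces syndrome `1111`: `T(BS₃ f(c)) = α |1111⟩ ⊗ (−c(0)|1⟩ + c(1)|0⟩)` with `α ≠ 0` independent of `c`. -/
theorem bit_phase_flip_qubit3_syndrome :
    ∃ α : ℂ, α ≠ 0 ∧ ∀ c : Fin 2 → ℂ,
      dec (phaseFlip 2 (bitFlip 2 (enc c))) = α • synData ![1, 1, 1, 1] (c 1) (-(c 0)) := by
  refine ⟨-32, by norm_num, fun c => ?_⟩
  ext z
  rw [dec_phaseFlip_bitFlip_enc_apply]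
  simp only [prod_one_add_neg_one_pow, forall_even_phaseCoeff_iff, Fintype.card_fin,
    Fin.sum_univ_two, synData, PiLp.smul_apply, smul_eq_mul]
  by_cases hs : z 0 = 1 ∧ z 1 = 1 ∧ z 2 = 1 ∧ z 3 = 1
  · obtain h4 | h4 : z 4 = 0 ∨ z 4 = 1 := by omega
    all_goals simp [hs, h4]; norm_num
  · simp [hs]
end
end
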